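/- Weakly nonlinear expansion of the DSW leading-edge amplitude: the function a₊(u₊) = 6√(1 − u₊) / arccosh( (2 − u₊)/u₊ ) − 3u₊, defined for 0 < u₊ < 1, satisfies a₊(1 − Δ) = 2Δ − (4/15)Δ² + O(Δ³) as Δ → 0⁺. -/

import Mathlib

/-! With `t = √Δ` the argument of `arcosh` is `(1 + t²)/(1 − t²) = cosh (2 artanh t)`, so
`a₊(1 − t²) = 3t / artanh t − 3(1 − t²)`. The odd Taylor bounds
`t + t³/3 + t⁵/5 ≤ artanh t ≤ t + t³/3 + t⁵/5 + t⁷/(1 − t²)` then give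
`3t / artanh t = 3 − t² − (4/15)t⁴ + O(t⁶)`, because `(3 − t² − (4/15)t⁴)(t + t³/3 + t⁵/5)`
agrees with `3t` up to order `t⁷`. -/

open Filter Asymptotics

/-- The inverse hyperbolic cosine, `arcosh x = log(x + √(x² − 1))` (for `x ≥ 1`). -/
noncomputable def arcosh (x : ℝ) : ℝ := Real.log (x + Real.sqrt (x ^ 2 - 1))

open scoped Topology

theorem arcosh_eq_real_arcosh : arcosh = Real.arcosh := rfl

namespace Real

open Finset

theorem arcosh_one_add_sq_div_one_sub_sq {t : ℝ} (ht₀ : 0 ≤ t) (ht₁ : t < 1) :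
    arcosh ((1 + t ^ 2) / (1 - t ^ 2)) = 2 * artanh t := by
  have ht : t ∈ Set.Ioo (-1) 1 := ⟨by linarith, ht₁⟩
  have hpos : 0 < 1 - t ^ 2 := by nlinarith
  have hcosh : cosh (2 * artanh t) = (1 + t ^ 2) / (1 - t ^ 2) := by
    rw [cosh_two_mul, cosh_artanh ht, sinh_artanh ht, div_pow, div_pow, sq_sqrt hpos.le]
    field_simp
  rw [← hcosh, arcosh_cosh (mul_nonneg zero_le_two (artanh_nonneg ht₀))]

theorem sum_range_le_artanh {t : ℝ} (ht₀ : 0 ≤ t) (ht₁ : t < 1) (n : ℕ) :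
    ∑ i ∈ range n, t ^ (2 * i + 1) / (2 * i + 1) ≤ artanh t := by
  rw [artanh_eq_half_log ⟨by linarith, ht₁.le⟩]
  exact sum_range_le_log_div ht₀ ht₁ n

theorem artanh_le_sum_range_add {t : ℝ} (ht₀ : 0 ≤ t) (ht₁ : t < 1) (n : ℕ) :
    artanh t ≤ ∑ i ∈ range n, t ^ (2 * i + 1) / (2 * i + 1) + t ^ (2 * n + 1) / (1 - t ^ 2) := by
  rw [artanh_eq_half_log ⟨by linarith, ht₁.le⟩]
  exact log_div_le_sum_range_add ht₀ ht₁ n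

theorem tendsto_sqrt_nhdsGT_zero : Tendsto sqrt (𝓝[>] 0) (𝓝[>] 0) :=
  tendsto_nhdsWithin_iff.mpr
    ⟨(continuous_sqrt.tendsto' 0 0 sqrt_zero).mono_left nhdsWithin_le_nhds,
      eventually_mem_nhdsWithin.mono fun _ hx => sqrt_pos.mpr hx⟩

theorem abs_three_mul_div_artanh_sub_le {t : ℝ} (ht₀ : 0 < t) (ht : t ≤ 1 / 2) :
    |3 * t / artanh t - (3 - t ^ 2 - 4 / 15 * t ^ 4)| ≤ 6 * t ^ 6 := by
  have ht₁ : t < 1 := by linarith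
  have ht2 : t ^ 2 ≤ 1 / 4 := by nlinarith
  set S := t + t ^ 3 / 3 + t ^ 5 / 5 with hS_def
  set P := 3 - t ^ 2 - 4 / 15 * t ^ 4 with hP_def
  have hS : S ≤ artanh t := by
    have h := sum_range_le_artanh ht₀.le ht₁ 3
    norm_num [sum_range_succ] at h
    exact h
  have hA : artanh t ≤ S + 2 * t ^ 7 := by
    have h := artanh_le_sum_range_add ht₀.le ht₁ 3
    norm_num [sum_range_succ] at h
    have htail : t ^ 7 / (1 - t ^ 2) ≤ 2 * t ^ 7 := by
      rw [div_le_iff₀ (by linarith)]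
      nlinarith [mul_le_mul_of_nonneg_left ht2 (pow_pos ht₀ 7).le, pow_pos ht₀ 7]
    linarith
  have hPS : 3 * t - P * S = 13 / 45 * t ^ 7 + 4 / 75 * t ^ 9 := by ring
  have hP : 0 ≤ P ∧ P ≤ 3 := by constructor <;> nlinarith [pow_pos ht₀ 2, pow_pos ht₀ 4]
  have htA : t ≤ artanh t := by linarith [pow_pos ht₀ 3, pow_pos ht₀ 5]
  have hA₀ : 0 < artanh t := ht₀.trans_le htA
  have hPE : 0 ≤ P * (artanh t - S) ∧ P * (artanh t - S) ≤ 3 * (2 * t ^ 7) :=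
    ⟨mul_nonneg hP.1 (by linarith), mul_le_mul hP.2 (by linarith) (by linarith) (by norm_num)⟩
  have hkey : 3 * t / artanh t - P
      = (13 / 45 * t ^ 7 + 4 / 75 * t ^ 9 - P * (artanh t - S)) / artanh t := by
    rw [← hPS]
    field_simp
    ring
  have ht9 : t ^ 9 ≤ t ^ 7 := pow_le_pow_of_le_one ht₀.le ht₁.le (by norm_num)
  rw [hkey, abs_div, abs_of_pos hA₀, div_le_iff₀ hA₀, abs_le]
  have h6 : 6 * t ^ 7 ≤ 6 * t ^ 6 * artanh t := by
    nlinarith [mul_le_mul_of_nonneg_left htA (pow_pos ht₀ 6).le]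
  constructor <;> linarith [pow_pos ht₀ 9]

theorem three_mul_div_artanh_sub_isBigO :
    (fun t => 3 * t / artanh t - (3 - t ^ 2 - 4 / 15 * t ^ 4)) =O[𝓝[>] 0] (fun t => t ^ 6) :=
  IsBigO.of_bound 6 <| by
    filter_upwards [Ioc_mem_nhdsGT (by norm_num : (0 : ℝ) < 1 / 2)] with t ht
    rw [norm_eq_abs, norm_of_nonneg (by positivity)]
    exact abs_three_mul_div_artanh_sub_le ht.1 ht.2

end Real

noncomputable def leadingEdgeAmplitude (u : ℝ) : ℝ :=
  6 * √(1 - u) / arcosh ((2 - u) / u) - 3 * u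

theorem leadingEdgeAmplitude_one_sub_sq {t : ℝ} (ht₀ : 0 ≤ t) (ht₁ : t < 1) :
    leadingEdgeAmplitude (1 - t ^ 2) = 3 * t / Real.artanh t - 3 * (1 - t ^ 2) := by
  have harg : (2 - (1 - t ^ 2)) / (1 - t ^ 2) = (1 + t ^ 2) / (1 - t ^ 2) := by ring
  rw [leadingEdgeAmplitude, harg, arcosh_eq_real_arcosh,
    Real.arcosh_one_add_sq_div_one_sub_sq ht₀ ht₁, sub_sub_cancel, Real.sqrt_sq ht₀]
  ring

/-- Weakly nonlinear expansion of the DSW leading-edge amplitude: the function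
`a₊(u₊) = 6√(1 − u₊)/arcosh((2 − u₊)/u₊) − 3u₊`, defined for `0 < u₊ < 1`, satisfies
`a₊(1 − Δ) = 2Δ − (4/15)Δ² + O(Δ³)` as `Δ → 0⁺`. -/
theorem dsw_leading_edge_amplitude_expansion :
    (fun Δ : ℝ =>
        (6 * Real.sqrt (1 - (1 - Δ)) / arcosh ((2 - (1 - Δ)) / (1 - Δ)) - 3 * (1 - Δ))
          - (2 * Δ - (4 / 15) * Δ ^ 2))
      =O[nhdsWithin 0 (Set.Ioi 0)] (fun Δ : ℝ => Δ ^ 3) := by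
  refine (Real.three_mul_div_artanh_sub_isBigO.comp_tendsto
    Real.tendsto_sqrt_nhdsGT_zero).congr' ?_ ?_
  · filter_upwards [Ioo_mem_nhdsGT one_pos] with Δ hΔ
    have hsq : √Δ ^ 2 = Δ := Real.sq_sqrt hΔ.1.le
    have hamp := leadingEdgeAmplitude_one_sub_sq (Real.sqrt_nonneg Δ)
      ((Real.sqrt_lt' one_pos).mpr (by rw [one_pow]; exact hΔ.2))
    rw [hsq] at hamp
    change _ = leadingEdgeAmplitude (1 - Δ) - _
    rw [hamp, Function.comp_apply]
    linear_combination (1 + 4 / 15 * (√Δ ^ 2 + Δ)) * hsq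
  · filter_upwards [self_mem_nhdsWithin] with Δ hΔ
    rw [Function.comp_apply, show 6 = 2 * 3 by rfl, pow_mul, Real.sq_sqrt (le_of_lt hΔ)]
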